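/- Let G be a connected simple graph, {E_1, …, E_k} a c-partition of E(G), e = uv ∈ E_i, U = ℓ_i(u), V = ℓ_i(v), and E = UV the corresponding edge of G_i = G/E_i. Then M_0(e|G) = (⋃_{X ∈ N_0(E|G_i)} E(X)) ∪ (⋃_{F ∈ M_0(E|G_i)} F̂); that is, the edges of G equidistant from u and v are exactly the edges inside components equidistant from U and V, together with the edges corresponding to quotient edges equidistant from U and V. -/

import Mathlib

open SimpleGraph

namespace SzegedCut

variable {V : Type*}

/-- `N_u(e|G)` for the edge `e = uv`: vertices strictly closer to `u` than to `v`. -/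
def Nset (G : SimpleGraph V) (u v : V) : Set V := {x | G.dist u x < G.dist v x}

/-- `N_0(e|G)` for the edge `e = uv`: vertices equidistant from `u` and `v`. -/
def N0set (G : SimpleGraph V) (u v : V) : Set V := {x | G.dist u x = G.dist v x}

/-- Distance from a vertex to an edge: minimum over the endpoints of the edge. -/
noncomputable def eDist (G : SimpleGraph V) (u : V) : Sym2 V → ℕ :=
  Sym2.lift ⟨fun x y => min (G.dist u x) (G.dist u y), fun x y => min_comm _ _⟩

/-- `M_u(e|G)` for the edge `e = uv`: edges strictly closer to `u` than to `v`. -/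
def Mset (G : SimpleGraph V) (u v : V) : Set (Sym2 V) :=
  {f | f ∈ G.edgeSet ∧ eDist G u f < eDist G v f}

/-- `M_0(e|G)` for the edge `e = uv`: edges equidistant from `u` and `v`. -/
def M0set (G : SimpleGraph V) (u v : V) : Set (Sym2 V) :=
  {f | f ∈ G.edgeSet ∧ eDist G u f = eDist G v f}

/-- The Djoković–Winkler relation `Θ` on the edges of `G`. -/
def Theta (G : SimpleGraph V) (e₁ e₂ : Sym2 V) : Prop :=
  e₁ ∈ G.edgeSet ∧ e₂ ∈ G.edgeSet ∧
    ∃ u₁ v₁ u₂ v₂, e₁ = s(u₁, v₁) ∧ e₂ = s(u₂, v₂) ∧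
      G.dist u₁ u₂ + G.dist v₁ v₂ ≠ G.dist u₁ v₂ + G.dist u₂ v₁

/-- `Θ*`, the transitive closure of the Djoković–Winkler relation. -/
def ThetaStar (G : SimpleGraph V) : Sym2 V → Sym2 V → Prop :=
  Relation.TransGen (Theta G)

/-- A c-partition of `E(G)`: a partition of the edge set each of whose parts is a
union of `Θ*`-classes (equivalently, is closed under `Θ*`). -/
def IsCPartition (G : SimpleGraph V) {k : ℕ} (P : Fin k → Set (Sym2 V)) : Prop :=
  (⋃ i, P i) = G.edgeSet ∧
  (∀ i j, i ≠ j → Disjoint (P i) (P j)) ∧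
  (∀ i, ∀ e ∈ P i, ∀ f, ThetaStar G e f → f ∈ P i)

/-- The connected components of `G \ F`, i.e. the vertices of the quotient graph `G/F`. -/
abbrev Comp (G : SimpleGraph V) (F : Set (Sym2 V)) := (G.deleteEdges F).ConnectedComponent

/-- `ℓ(u)`: the connected component of `G \ F` containing `u`. -/
def proj (G : SimpleGraph V) (F : Set (Sym2 V)) (u : V) : Comp G F :=
  (G.deleteEdges F).connectedComponentMk u

/-- The quotient graph `G/F`: vertices are the connected components of `G \ F`,
two components being adjacent iff some vertex of one is adjacent in `G` to a
vertex of the other. -/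
def quotGraph (G : SimpleGraph V) (F : Set (Sym2 V)) : SimpleGraph (Comp G F) where
  Adj X Y := X ≠ Y ∧ ∃ x y, G.Adj x y ∧ proj G F x = X ∧ proj G F y = Y
  symm := by
    constructor
    rintro X Y ⟨hne, x, y, hadj, hx, hy⟩
    exact ⟨hne.symm, y, x, hadj.symm, hy, hx⟩
  loopless := by constructor; rintro X ⟨hne, -⟩; exact hne rfl

/-- `Ê` for a quotient edge `E`: the edges of `G` joining the two components of `E`. -/
def hatE (G : SimpleGraph V) (F : Set (Sym2 V)) (E : Sym2 (Comp G F)) : Set (Sym2 V) :=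
  {e | e ∈ G.edgeSet ∧ e.map (proj G F) = E}

/-- `E(X)` for a component `X` of `G \ F`: the edges of `G \ F` lying inside `X`. -/
def compEdges (G : SimpleGraph V) (F : Set (Sym2 V)) (X : Comp G F) : Set (Sym2 V) :=
  {f | f ∈ (G.deleteEdges F).edgeSet ∧ ∀ x ∈ f, x ∈ X.supp}

/-- Sum of a weight function over a set. -/
noncomputable def vsum {α : Type*} (s : Set α) (w : α → ℝ) : ℝ := ∑ᶠ x ∈ s, w x

/-- `n_u(e|G_sw)` for `e = uv`. -/
noncomputable def nval (G : SimpleGraph V) (wv : V → ℝ) (u v : V) : ℝ :=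
  vsum (Nset G u v) wv

/-- `n_0(e|G_sw)` for `e = uv`. -/
noncomputable def n0val (G : SimpleGraph V) (wv : V → ℝ) (u v : V) : ℝ :=
  vsum (N0set G u v) wv

/-- `m_u(e|G_sw)` for `e = uv`. -/
noncomputable def mval (G : SimpleGraph V) (sv : V → ℝ) (se : Sym2 V → ℝ) (u v : V) : ℝ :=
  vsum (Nset G u v) sv + vsum (Mset G u v) se

/-- `m_0(e|G_sw)` for `e = uv`. -/
noncomputable def m0val (G : SimpleGraph V) (sv : V → ℝ) (se : Sym2 V → ℝ) (u v : V) : ℝ :=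
  vsum (N0set G u v) sv + vsum (M0set G u v) se

lemma N0set_comm (G : SimpleGraph V) (u v : V) : N0set G u v = N0set G v u :=
  Set.ext fun _ => eq_comm

lemma M0set_comm (G : SimpleGraph V) (u v : V) : M0set G u v = M0set G v u :=
  Set.ext fun _ => and_congr_right fun _ => eq_comm

lemma n0val_comm (G : SimpleGraph V) (wv : V → ℝ) (u v : V) :
    n0val G wv u v = n0val G wv v u := by rw [n0val, n0val, N0set_comm]

lemma m0val_comm (G : SimpleGraph V) (sv : V → ℝ) (se : Sym2 V → ℝ) (u v : V) :
    m0val G sv se u v = m0val G sv se v u := by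
  rw [m0val, m0val, N0set_comm, M0set_comm]

/-- A regular function of six variables: symmetric in the first two and in the
next two coordinates. -/
def IsRegular (F : ℝ → ℝ → ℝ → ℝ → ℝ → ℝ → ℝ) : Prop :=
  ∀ a b c d x y, F a b c d x y = F b a d c x y

/-- `F(e|G_sw)` for a regular function `F`. -/
noncomputable def FEdge (G : SimpleGraph V) (wv sv : V → ℝ) (se : Sym2 V → ℝ)
    (F : ℝ → ℝ → ℝ → ℝ → ℝ → ℝ → ℝ) (hF : IsRegular F) : Sym2 V → ℝ :=
  Sym2.lift ⟨fun u v =>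
      F (nval G wv u v) (nval G wv v u) (mval G sv se u v) (mval G sv se v u)
        (n0val G wv u v) (m0val G sv se u v),
    fun u v => by dsimp only; rw [hF, n0val_comm, m0val_comm]⟩

/-- The general Szeged-like topological index `TI_F(G_sw)`. -/
noncomputable def TI (G : SimpleGraph V) (wv sv : V → ℝ) (we se : Sym2 V → ℝ)
    (F : ℝ → ℝ → ℝ → ℝ → ℝ → ℝ → ℝ) (hF : IsRegular F) : ℝ :=
  ∑ᶠ e ∈ G.edgeSet, we e * FEdge G wv sv se F hF e

/-- Vertex weight `w_v^i` of the strength-weighted quotient graph. -/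
noncomputable def qwv (G : SimpleGraph V) (F : Set (Sym2 V)) (wv : V → ℝ)
    (X : Comp G F) : ℝ :=
  vsum X.supp wv

/-- Vertex weight `s_v^i` of the strength-weighted quotient graph. -/
noncomputable def qsv (G : SimpleGraph V) (F : Set (Sym2 V)) (sv : V → ℝ)
    (se : Sym2 V → ℝ) (X : Comp G F) : ℝ :=
  vsum (compEdges G F X) se + vsum X.supp sv

/-- Edge weight `w_e^i` of the strength-weighted quotient graph. -/
noncomputable def qwe (G : SimpleGraph V) (F : Set (Sym2 V)) (we : Sym2 V → ℝ)
    (E : Sym2 (Comp G F)) : ℝ :=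
  vsum (hatE G F E) we

/-- Edge weight `s_e^i` of the strength-weighted quotient graph. -/
noncomputable def qse (G : SimpleGraph V) (F : Set (Sym2 V)) (se : Sym2 V → ℝ)
    (E : Sym2 (Comp G F)) : ℝ :=
  vsum (hatE G F E) se


section Machinery
open scoped Classical

variable {G : SimpleGraph V} {F : Set (Sym2 V)}

open Classical in
noncomputable def xCount (F : Set (Sym2 V)) {x y : V} (p : G.Walk x y) : ℕ :=
  p.edges.countP (fun e => decide (e ∈ F))

@[simp] lemma xCount_nil {x : V} : xCount F (Walk.nil : G.Walk x x) = 0 := rfl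

lemma xCount_cons {x y z : V} (h : G.Adj x y) (p : G.Walk y z) :
    xCount F (Walk.cons h p) = (if s(x, y) ∈ F then 1 else 0) + xCount F p := by
  classical
  simp only [xCount, Walk.edges_cons, List.countP_cons]
  by_cases hm : s(x, y) ∈ F <;> simp [hm] <;> omega

lemma xCount_append {x y z : V} (p : G.Walk x y) (q : G.Walk y z) :
    xCount F (p.append q) = xCount F p + xCount F q := by
  simp [xCount, Walk.edges_append, List.countP_append]

lemma xCount_eq_zero {x y : V} (p : G.Walk x y) (h : ∀ e ∈ p.edges, e ∉ F) :
    xCount F p = 0 := by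
  classical
  simp only [xCount, List.countP_eq_zero]
  intro e he
  simpa using h e he

lemma xCount_eq_sum {x y : V} (p : G.Walk x y) :
    xCount F p = ∑ j ∈ Finset.range p.length,
      (if s(p.getVert j, p.getVert (j + 1)) ∈ F then 1 else 0) := by
  induction p with
  | nil => simp
  | cons h p ih =>
    rw [xCount_cons, Walk.length_cons, Finset.sum_range_succ']
    simp only [Walk.getVert_cons_succ, Walk.getVert_zero]
    rw [ih]
    exact Nat.add_comm _ _

lemma dist_adj_eq_one {x y : V} (h : G.Adj x y) : G.dist x y = 1 :=
  dist_eq_one_iff_adj.mpr h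

lemma geodesic_getVert (hG : G.Connected) {x y : V} (p : G.Walk x y)
    (hp : p.length = G.dist x y) {i : ℕ} (hi : i ≤ p.length) :
    G.dist x (p.getVert i) = i ∧ G.dist (p.getVert i) y = p.length - i := by
  have h1 : ∀ j, G.dist x (p.getVert j) ≤ j := by
    intro j
    induction j with
    | zero => simp
    | succ n ih =>
      rcases le_or_gt p.length n with hn | hn
      · rw [p.getVert_of_length_le (le_trans hn (Nat.le_succ n))]
        rw [p.getVert_of_length_le hn] at ih
        omega
      · have := hG.dist_triangle (u := x) (v := p.getVert n) (w := p.getVert (n + 1))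
        rw [dist_adj_eq_one (p.adj_getVert_succ hn)] at this
        omega
  have h2 : ∀ k, G.dist (p.getVert (p.length - k)) y ≤ k := by
    intro k
    induction k with
    | zero => simp [Walk.getVert_length]
    | succ n ih =>
      rcases le_or_gt p.length (n + 1) with hn | hn
      · have h0 : p.length - (n + 1) = 0 := by omega
        rw [h0, Walk.getVert_zero, ← hp]
        omega
      · have hlt : p.length - (n + 1) < p.length := by omega
        have hstep := hG.dist_triangle (u := p.getVert (p.length - (n + 1)))
          (v := p.getVert (p.length - (n + 1) + 1)) (w := y)
        rw [dist_adj_eq_one (p.adj_getVert_succ hlt)] at hstep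
        have he : p.length - (n + 1) + 1 = p.length - n := by omega
        rw [he] at hstep
        omega
  have h3 := hG.dist_triangle (u := x) (v := p.getVert i) (w := y)
  have h4 := h1 i
  have h5 := h2 (p.length - i)
  rw [show p.length - (p.length - i) = i by omega] at h5
  constructor <;> omega

/-- `ψ_{x,y}(w) = d(x,w) - d(y,w)` as an integer. -/
noncomputable def psi (G : SimpleGraph V) (x y w : V) : ℤ :=
  (G.dist x w : ℤ) - (G.dist y w : ℤ)

lemma theta_of_adj {x y p q : V} (h1 : G.Adj x y) (h2 : G.Adj p q)
    (hne : G.dist x p + G.dist y q ≠ G.dist x q + G.dist y p) :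
    Theta G s(x, y) s(p, q) :=
  ⟨h1, h2, x, y, p, q, rfl, rfl, by rw [SimpleGraph.dist_comm (u := p) (v := y)]; exact hne⟩

lemma psiDiff_eq_zero (hF : ∀ e ∈ F, ∀ f, Theta G e f → f ∈ F)
    {x y p q : V} (h1 : G.Adj x y) (h2 : G.Adj p q)
    (h : (s(x, y) ∈ F ∧ s(p, q) ∉ F) ∨ (s(p, q) ∈ F ∧ s(x, y) ∉ F)) :
    psi G x y p - psi G x y q = 0 := by
  have c1 : G.dist p x = G.dist x p := SimpleGraph.dist_comm
  have c2 : G.dist p y = G.dist y p := SimpleGraph.dist_comm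
  have c3 : G.dist q x = G.dist x q := SimpleGraph.dist_comm
  have c4 : G.dist q y = G.dist y q := SimpleGraph.dist_comm
  by_contra hne
  have hne' : G.dist x p + G.dist y q ≠ G.dist x q + G.dist y p := by
    simp only [psi] at hne
    intro hh
    apply hne
    omega
  rcases h with ⟨hin, hout⟩ | ⟨hin, hout⟩
  · exact hout (hF _ hin _ (theta_of_adj h1 h2 hne'))
  · refine hout (hF _ hin _ (theta_of_adj h2 h1 ?_))
    omega

lemma psi_ends (hG : G.Connected) {a z : V} (P : G.Walk a z)
    (hP : P.length = G.dist a z) {i : ℕ} (hi : i < P.length) :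
    psi G (P.getVert i) (P.getVert (i + 1)) a
      - psi G (P.getVert i) (P.getVert (i + 1)) z = -2 := by
  obtain ⟨d1, d2⟩ := geodesic_getVert hG P hP (le_of_lt hi)
  obtain ⟨d3, d4⟩ := geodesic_getVert hG P hP (show i + 1 ≤ P.length from hi)
  have c1 : G.dist (P.getVert i) a = i := by rw [SimpleGraph.dist_comm]; exact d1
  have c3 : G.dist (P.getVert (i + 1)) a = i + 1 := by rw [SimpleGraph.dist_comm]; exact d3
  simp only [psi, c1, c3, d2, d4]
  have : i + 1 ≤ P.length := hi
  omega

/-- The Graham–Winkler style double counting identity. -/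
lemma core_eq (hG : G.Connected) (hF : ∀ e ∈ F, ∀ f, Theta G e f → f ∈ F)
    {a z : V} (P W : G.Walk a z) (hP : P.length = G.dist a z) :
    ∑ j ∈ Finset.range W.length,
      (if s(W.getVert j, W.getVert (j + 1)) ∈ F
        then psi G a z (W.getVert j) - psi G a z (W.getVert (j + 1)) else 0)
      = -2 * (xCount F P : ℤ) := by
  have hcol : ∀ j ∈ Finset.range W.length,
      (if s(W.getVert j, W.getVert (j + 1)) ∈ F
        then psi G a z (W.getVert j) - psi G a z (W.getVert (j + 1)) else 0)
      = ∑ i ∈ Finset.range P.length,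
          (if s(P.getVert i, P.getVert (i + 1)) ∈ F then (1 : ℤ) else 0)
          * (psi G (P.getVert i) (P.getVert (i + 1)) (W.getVert j)
             - psi G (P.getVert i) (P.getVert (i + 1)) (W.getVert (j + 1))) := by
    intro j hj
    rw [Finset.mem_range] at hj
    have hWadj : G.Adj (W.getVert j) (W.getVert (j + 1)) := W.adj_getVert_succ hj
    by_cases hw : s(W.getVert j, W.getVert (j + 1)) ∈ F
    · rw [if_pos hw]
      have hterm : ∀ i ∈ Finset.range P.length,
          (if s(P.getVert i, P.getVert (i + 1)) ∈ F then (1 : ℤ) else 0)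
          * (psi G (P.getVert i) (P.getVert (i + 1)) (W.getVert j)
             - psi G (P.getVert i) (P.getVert (i + 1)) (W.getVert (j + 1)))
          = ((G.dist (P.getVert i) (W.getVert j) : ℤ)
              - (G.dist (P.getVert i) (W.getVert (j + 1)) : ℤ))
            - ((G.dist (P.getVert (i + 1)) (W.getVert j) : ℤ)
              - (G.dist (P.getVert (i + 1)) (W.getVert (j + 1)) : ℤ)) := by
        intro i hi
        rw [Finset.mem_range] at hi
        have hPadj : G.Adj (P.getVert i) (P.getVert (i + 1)) := P.adj_getVert_succ hi
        by_cases hp : s(P.getVert i, P.getVert (i + 1)) ∈ F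
        · rw [if_pos hp, one_mul]
          simp only [psi]
          ring
        · rw [if_neg hp, zero_mul]
          have h0 := psiDiff_eq_zero hF hPadj hWadj (Or.inr ⟨hw, hp⟩)
          simp only [psi] at h0 ⊢
          omega
      rw [Finset.sum_congr rfl hterm, Finset.sum_range_sub']
      simp only [Walk.getVert_zero, Walk.getVert_length, psi]
      ring
    · rw [if_neg hw]
      symm
      apply Finset.sum_eq_zero
      intro i hi
      rw [Finset.mem_range] at hi
      have hPadj : G.Adj (P.getVert i) (P.getVert (i + 1)) := P.adj_getVert_succ hi
      by_cases hp : s(P.getVert i, P.getVert (i + 1)) ∈ F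
      · rw [if_pos hp, one_mul]
        exact psiDiff_eq_zero hF hPadj hWadj (Or.inl ⟨hp, hw⟩)
      · rw [if_neg hp, zero_mul]
  rw [Finset.sum_congr rfl hcol, Finset.sum_comm]
  have hrow : ∀ i ∈ Finset.range P.length,
      ∑ j ∈ Finset.range W.length,
        (if s(P.getVert i, P.getVert (i + 1)) ∈ F then (1 : ℤ) else 0)
        * (psi G (P.getVert i) (P.getVert (i + 1)) (W.getVert j)
           - psi G (P.getVert i) (P.getVert (i + 1)) (W.getVert (j + 1)))
      = (if s(P.getVert i, P.getVert (i + 1)) ∈ F then (1 : ℤ) else 0) * (-2) := by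
    intro i hi
    rw [Finset.mem_range] at hi
    rw [← Finset.mul_sum, Finset.sum_range_sub']
    rw [Walk.getVert_zero, Walk.getVert_length]
    rw [psi_ends hG P hP hi]
  rw [Finset.sum_congr rfl hrow]
  rw [xCount_eq_sum]
  push_cast
  rw [Finset.mul_sum]
  apply Finset.sum_congr rfl
  intro i _
  by_cases hp : s(P.getVert i, P.getVert (i + 1)) ∈ F <;> simp [hp]

lemma psi_adj_ge (hG : G.Connected) (a z : V) {x y : V} (h : G.Adj x y) :
    -2 ≤ psi G a z x - psi G a z y := by
  have t1 := hG.dist_triangle (u := a) (v := x) (w := y)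
  have t2 := hG.dist_triangle (u := z) (v := y) (w := x)
  rw [dist_adj_eq_one h] at t1
  rw [dist_adj_eq_one h.symm] at t2
  simp only [psi]
  omega

lemma sum_ind_eq (W : G.Walk x y) :
    ∑ j ∈ Finset.range W.length,
      (-2) * (if s(W.getVert j, W.getVert (j + 1)) ∈ F then (1 : ℤ) else 0)
      = -2 * (xCount F W : ℤ) := by
  rw [xCount_eq_sum]
  push_cast
  rw [Finset.mul_sum]

/-- A geodesic crosses `F` at most as often as any walk with the same ends. -/
lemma key_ineq (hG : G.Connected) (hF : ∀ e ∈ F, ∀ f, Theta G e f → f ∈ F)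
    {a z : V} (P W : G.Walk a z) (hP : P.length = G.dist a z) :
    xCount F P ≤ xCount F W := by
  have hcore := core_eq hG hF P W hP
  have hbound : ∑ j ∈ Finset.range W.length,
      (-2) * (if s(W.getVert j, W.getVert (j + 1)) ∈ F then (1 : ℤ) else 0)
      ≤ ∑ j ∈ Finset.range W.length,
      (if s(W.getVert j, W.getVert (j + 1)) ∈ F
        then psi G a z (W.getVert j) - psi G a z (W.getVert (j + 1)) else 0) := by
    apply Finset.sum_le_sum
    intro j hj
    rw [Finset.mem_range] at hj
    by_cases hw : s(W.getVert j, W.getVert (j + 1)) ∈ F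
    · rw [if_pos hw, if_pos hw, mul_one]
      exact psi_adj_ge hG a z (W.adj_getVert_succ hj)
    · rw [if_neg hw, if_neg hw, mul_zero]
  rw [sum_ind_eq, hcore] at hbound
  omega

/-- Refined inequality for the equidistant case. -/
lemma key_refined (hG : G.Connected) (hF : ∀ e ∈ F, ∀ f, Theta G e f → f ∈ F)
    {a b z : V} (hab : G.Adj a b) (hf : s(a, b) ∈ F)
    (hdeq : G.dist a z = G.dist b z)
    (Pa : G.Walk a z) (hPa : Pa.length = G.dist a z)
    (Pb : G.Walk b z) (hPb : Pb.length = G.dist b z) :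
    xCount F Pa ≤ xCount F Pb := by
  have hcore := core_eq hG hF Pa (Walk.cons hab Pb) hPa
  rw [show (Walk.cons hab Pb).length = Pb.length + 1 from rfl,
    Finset.sum_range_succ'] at hcore
  simp only [Walk.getVert_cons_succ, Walk.getVert_zero] at hcore
  rw [if_pos hf] at hcore
  have h0 : psi G a z a - psi G a z b = -1 := by
    have e1 : G.dist a a = 0 := SimpleGraph.dist_self
    have e2 : G.dist z a = G.dist a z := SimpleGraph.dist_comm
    have e3 : G.dist a b = 1 := dist_adj_eq_one hab
    have e4 : G.dist z b = G.dist b z := SimpleGraph.dist_comm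
    simp only [psi, e1, e2, e3, e4, hdeq]
    have hpos : 1 ≤ G.dist b z := by
      by_contra hzero
      have : G.dist b z = 0 := by omega
      have hz : G.dist a z = 0 := by omega
      have : a = z := ((hG.dist_eq_zero_iff (u := a) (v := z))).mp hz
      subst this
      have : b = a := (hG.dist_eq_zero_iff).mp (by omega)
      exact G.loopless.irrefl a (this ▸ hab)
    omega
  rw [h0] at hcore
  have hbound : ∑ j ∈ Finset.range Pb.length,
      (-2) * (if s(Pb.getVert j, Pb.getVert (j + 1)) ∈ F then (1 : ℤ) else 0)
      ≤ ∑ j ∈ Finset.range Pb.length,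
      (if s(Pb.getVert j, Pb.getVert (j + 1)) ∈ F
        then psi G a z (Pb.getVert j) - psi G a z (Pb.getVert (j + 1)) else 0) := by
    apply Finset.sum_le_sum
    intro j hj
    rw [Finset.mem_range] at hj
    by_cases hw : s(Pb.getVert j, Pb.getVert (j + 1)) ∈ F
    · rw [if_pos hw, if_pos hw, mul_one]
      exact psi_adj_ge hG a z (Pb.adj_getVert_succ hj)
    · rw [if_neg hw, if_neg hw, mul_zero]
  rw [sum_ind_eq] at hbound
  have hcore' : (∑ j ∈ Finset.range Pb.length,
      (if s(Pb.getVert j, Pb.getVert (j + 1)) ∈ F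
        then psi G a z (Pb.getVert j) - psi G a z (Pb.getVert (j + 1)) else 0)) + -1
      = -2 * (xCount F Pa : ℤ) := hcore
  omega

lemma proj_eq_of_adj_not_mem {x y : V} (h : G.Adj x y) (hxy : s(x, y) ∉ F) :
    proj G F x = proj G F y :=
  ConnectedComponent.sound (SimpleGraph.Adj.reachable (by
    rw [deleteEdges_adj]; exact ⟨h, hxy⟩))

lemma quot_adj {x y : V} (h : G.Adj x y) (hne : proj G F x ≠ proj G F y) :
    (quotGraph G F).Adj (proj G F x) (proj G F y) :=
  ⟨hne, x, y, h, rfl, rfl⟩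

lemma quot_reach_of_walk {x y : V} (p : G.Walk x y) :
    (quotGraph G F).Reachable (proj G F x) (proj G F y) := by
  induction p with
  | nil => exact Reachable.refl _
  | @cons a a₁ b h p ih =>
    refine Reachable.trans ?_ ih
    by_cases he : proj G F a = proj G F a₁
    · exact he ▸ Reachable.refl _
    · exact (quot_adj h he).reachable

lemma quot_connected (hG : G.Connected) : (quotGraph G F).Connected := by
  have hne : Nonempty V := hG.nonempty
  haveI : Nonempty (Comp G F) := ⟨proj G F (Classical.arbitrary V)⟩
  constructor
  intro X Y
  obtain ⟨x, hx⟩ := X.exists_rep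
  obtain ⟨y, hy⟩ := Y.exists_rep
  obtain ⟨p⟩ := hG.preconnected x y
  rw [← hx, ← hy]
  exact quot_reach_of_walk p

lemma hdist_le_xCount (hH : (quotGraph G F).Connected) {x y : V} (p : G.Walk x y) :
    (quotGraph G F).dist (proj G F x) (proj G F y) ≤ xCount F p := by
  induction p with
  | nil => simp
  | @cons x x₁ y h p ih =>
    rw [xCount_cons]
    by_cases hm : s(x, x₁) ∈ F
    · rw [if_pos hm]
      have tri := hH.dist_triangle (u := proj G F x) (v := proj G F x₁) (w := proj G F y)
      have h1 : (quotGraph G F).dist (proj G F x) (proj G F x₁) ≤ 1 := by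
        by_cases he : proj G F x = proj G F x₁
        · rw [he, SimpleGraph.dist_self]; omega
        · rw [dist_adj_eq_one (quot_adj h he)]
      omega
    · rw [if_neg hm, proj_eq_of_adj_not_mem h hm]
      omega

lemma exists_walk_xCount_zero {x x' : V} (h : proj G F x = proj G F x') :
    ∃ p : G.Walk x x', xCount F p = 0 := by
  obtain ⟨p0⟩ : (G.deleteEdges F).Reachable x x' := ConnectedComponent.exact h
  refine ⟨p0.transfer G (fun e he => ?_), ?_⟩
  · exact ((G.edgeSet_deleteEdges F) ▸ p0.edges_subset_edgeSet he).1
  · apply xCount_eq_zero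
    intro e he
    rw [Walk.edges_transfer] at he
    exact ((G.edgeSet_deleteEdges F) ▸ p0.edges_subset_edgeSet he).2

lemma exists_walk_xCount_le {X Y : Comp G F} (q : (quotGraph G F).Walk X Y) :
    ∀ {x y : V}, proj G F x = X → proj G F y = Y →
      ∃ p : G.Walk x y, xCount F p ≤ q.length := by
  induction q with
  | nil =>
    intro x y hx hy
    obtain ⟨p, hp⟩ := exists_walk_xCount_zero (F := F) (hx.trans hy.symm)
    exact ⟨p, by omega⟩
  | @cons X X' Y hadj q ih =>
    intro x y hx hy
    obtain ⟨hne, x₁, y₁, hadj₁, hx₁, hy₁⟩ := hadj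
    obtain ⟨p₁, hp₁⟩ := exists_walk_xCount_zero (F := F) (hx.trans (hx₁.symm))
    obtain ⟨p₂, hp₂⟩ := ih hy₁ hy
    refine ⟨p₁.append (Walk.cons hadj₁ p₂), ?_⟩
    rw [xCount_append, xCount_cons]
    show _ ≤ q.length + 1
    by_cases hm : s(x₁, y₁) ∈ F
    · rw [if_pos hm]; omega
    · rw [if_neg hm]; omega

/-- Characterization of quotient distance: crossing count of any geodesic. -/
lemma xCount_geodesic_eq (hG : G.Connected) (hH : (quotGraph G F).Connected)
    (hF : ∀ e ∈ F, ∀ f, Theta G e f → f ∈ F)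
    {x y : V} (P : G.Walk x y) (hP : P.length = G.dist x y) :
    xCount F P = (quotGraph G F).dist (proj G F x) (proj G F y) := by
  obtain ⟨q, hq⟩ := hH.exists_walk_length_eq_dist (proj G F x) (proj G F y)
  obtain ⟨W, hW⟩ := exists_walk_xCount_le q rfl rfl
  have h1 := hdist_le_xCount hH P
  have h2 := key_ineq hG hF P W hP
  omega

/-- The master lemma: distance differences transfer to the quotient graph. -/
lemma master (hG : G.Connected) (hH : (quotGraph G F).Connected)
    (hF : ∀ e ∈ F, ∀ f, Theta G e f → f ∈ F)
    {a b : V} (hab : G.Adj a b) (hf : s(a, b) ∈ F) (z : V) :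
    G.dist a z + (quotGraph G F).dist (proj G F b) (proj G F z)
      = G.dist b z + (quotGraph G F).dist (proj G F a) (proj G F z) := by
  have tri1 := hG.dist_triangle (u := a) (v := b) (w := z)
  have tri2 := hG.dist_triangle (u := b) (v := a) (w := z)
  rw [dist_adj_eq_one hab] at tri1
  rw [dist_adj_eq_one hab.symm] at tri2
  obtain ⟨Pa, hPa⟩ := hG.exists_walk_length_eq_dist a z
  obtain ⟨Pb, hPb⟩ := hG.exists_walk_length_eq_dist b z
  have case1 : G.dist a z = G.dist b z + 1 →
      (quotGraph G F).dist (proj G F a) (proj G F z)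
        = (quotGraph G F).dist (proj G F b) (proj G F z) + 1 := by
    intro hd
    have hlen : (Walk.cons hab Pb).length = G.dist a z := by
      rw [Walk.length_cons, hPb]; omega
    have e1 := xCount_geodesic_eq hG hH hF (Walk.cons hab Pb) hlen
    have e2 := xCount_geodesic_eq hG hH hF Pb hPb
    rw [xCount_cons, if_pos hf] at e1
    omega
  have case2 : G.dist b z = G.dist a z + 1 →
      (quotGraph G F).dist (proj G F b) (proj G F z)
        = (quotGraph G F).dist (proj G F a) (proj G F z) + 1 := by
    intro hd
    have hlen : (Walk.cons hab.symm Pa).length = G.dist b z := by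
      rw [Walk.length_cons, hPa]; omega
    have e1 := xCount_geodesic_eq hG hH hF (Walk.cons hab.symm Pa) hlen
    have e2 := xCount_geodesic_eq hG hH hF Pa hPa
    rw [xCount_cons, if_pos (by rwa [Sym2.eq_swap])] at e1
    omega
  rcases Nat.lt_trichotomy (G.dist a z) (G.dist b z) with hlt | heq | hgt
  · have := case2 (by omega)
    omega
  · have h1 := key_refined hG hF hab hf heq Pa hPa Pb hPb
    have h2 := key_refined hG hF hab.symm (by rwa [Sym2.eq_swap]) heq.symm Pb hPb Pa hPa
    have e1 := xCount_geodesic_eq hG hH hF Pa hPa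
    have e2 := xCount_geodesic_eq hG hH hF Pb hPb
    omega
  · have := case1 (by omega)
    omega

lemma proj_ne_of_mem (hG : G.Connected) (hH : (quotGraph G F).Connected)
    (hF : ∀ e ∈ F, ∀ f, Theta G e f → f ∈ F)
    {a b : V} (hab : G.Adj a b) (hf : s(a, b) ∈ F) :
    proj G F a ≠ proj G F b := by
  have hm := master hG hH hF hab hf b
  rw [SimpleGraph.dist_self, dist_adj_eq_one hab, SimpleGraph.dist_self] at hm
  intro h
  rw [h, SimpleGraph.dist_self] at hm
  omega

end Machinery


section Assembly

lemma eDist_mk (G : SimpleGraph V) (u x y : V) :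
    eDist G u s(x, y) = min (G.dist u x) (G.dist u y) := rfl

end Assembly

/-- With `e = uv ∈ E_i`, `U = ℓ_i(u)`, `V = ℓ_i(v)` and `E = UV` the
corresponding edge of `G_i = G/E_i`:
`M_0(e|G) = (⋃_{X ∈ N_0(E|G_i)} E(X)) ∪ (⋃_{F ∈ M_0(E|G_i)} F̂)`. -/
theorem M0set_eq_iUnion {V : Type*} [Finite V] (G : SimpleGraph V) (hG : G.Connected)
    {k : ℕ} (P : Fin k → Set (Sym2 V)) (hP : IsCPartition G P)
    (i : Fin k) (u v : V) (he : s(u, v) ∈ P i) :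
    M0set G u v =
      (⋃ X ∈ N0set (quotGraph G (P i)) (proj G (P i) u) (proj G (P i) v),
          compEdges G (P i) X) ∪
        (⋃ E ∈ M0set (quotGraph G (P i)) (proj G (P i) u) (proj G (P i) v),
          hatE G (P i) E) := by
  classical
  have hsub : P i ⊆ G.edgeSet := hP.1 ▸ Set.subset_iUnion P i
  have hclo : ∀ e ∈ P i, ∀ f, Theta G e f → f ∈ P i :=
    fun e he' f ht => hP.2.2 i e he' f (Relation.TransGen.single ht)
  have hadj_uv : G.Adj u v := (G.mem_edgeSet).mp (hsub he)
  have hH : (quotGraph G (P i)).Connected := quot_connected hG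
  ext f
  induction f using Sym2.ind with
  | _ x y =>
  have m1 := master hG hH hclo hadj_uv he x
  have m2 := master hG hH hclo hadj_uv he y
  constructor
  · rintro ⟨hfe, hmin⟩
    have hxy : G.Adj x y := (G.mem_edgeSet).mp hfe
    rw [eDist_mk, eDist_mk] at hmin
    by_cases hmem : s(x, y) ∈ P i
    · have hne := proj_ne_of_mem hG hH hclo hxy hmem
      have m3 := master hG hH hclo hxy hmem u
      have c1 : G.dist x u = G.dist u x := SimpleGraph.dist_comm
      have c2 : G.dist y u = G.dist u y := SimpleGraph.dist_comm
      have c3 : (quotGraph G (P i)).dist (proj G (P i) y) (proj G (P i) u)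
          = (quotGraph G (P i)).dist (proj G (P i) u) (proj G (P i) y) :=
        SimpleGraph.dist_comm
      have c4 : (quotGraph G (P i)).dist (proj G (P i) x) (proj G (P i) u)
          = (quotGraph G (P i)).dist (proj G (P i) u) (proj G (P i) x) :=
        SimpleGraph.dist_comm
      rw [c1, c2, c3, c4] at m3
      refine Set.mem_union_right _ ?_
      rw [Set.mem_iUnion₂]
      refine ⟨s(proj G (P i) x, proj G (P i) y),
        ⟨(quotGraph G (P i)).mem_edgeSet.mpr (quot_adj hxy hne), ?_⟩,
        ⟨hfe, by rw [Sym2.map_pair_eq]⟩⟩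
      rw [eDist_mk, eDist_mk]
      omega
    · have hpr := proj_eq_of_adj_not_mem hxy hmem
      rw [← hpr] at m2
      refine Set.mem_union_left _ ?_
      rw [Set.mem_iUnion₂]
      refine ⟨proj G (P i) x, ?_, ?_, ?_⟩
      · show (quotGraph G (P i)).dist _ _ = (quotGraph G (P i)).dist _ _
        omega
      · exact (G.deleteEdges (P i)).mem_edgeSet.mpr
          ((SimpleGraph.deleteEdges_adj).mpr ⟨hxy, hmem⟩)
      · intro w hw
        rw [Sym2.mem_iff] at hw
        rcases hw with rfl | rfl
        · exact (SimpleGraph.ConnectedComponent.mem_supp_iff _ _).mpr rfl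
        · exact (SimpleGraph.ConnectedComponent.mem_supp_iff _ _).mpr hpr.symm
  · intro hrhs
    rcases hrhs with hl | hr
    · rw [Set.mem_iUnion₂] at hl
      obtain ⟨X, hX, hed, hsupp⟩ := hl
      rw [SimpleGraph.edgeSet_deleteEdges] at hed
      have hxy : G.Adj x y := (G.mem_edgeSet).mp hed.1
      have hmem : s(x, y) ∉ P i := hed.2
      have hpr := proj_eq_of_adj_not_mem hxy hmem
      have hXx : proj G (P i) x = X :=
        (SimpleGraph.ConnectedComponent.mem_supp_iff _ _).mp (hsupp x (by rw [Sym2.mem_iff]; left; rfl))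
      rw [← hpr, hXx] at m2
      rw [hXx] at m1
      have hX' : (quotGraph G (P i)).dist (proj G (P i) u) X
          = (quotGraph G (P i)).dist (proj G (P i) v) X := hX
      refine ⟨hed.1, ?_⟩
      rw [eDist_mk, eDist_mk]
      omega
    · rw [Set.mem_iUnion₂] at hr
      obtain ⟨E, hE, hfe, hmap⟩ := hr
      have hxy : G.Adj x y := (G.mem_edgeSet).mp hfe
      rw [Sym2.map_pair_eq] at hmap
      subst hmap
      obtain ⟨hEe, hEq⟩ := hE
      have hne : proj G (P i) x ≠ proj G (P i) y :=
        ((quotGraph G (P i)).mem_edgeSet.mp hEe).ne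
      have hmem : s(x, y) ∈ P i := by
        by_contra hmem
        exact hne (proj_eq_of_adj_not_mem hxy hmem)
      have m3 := master hG hH hclo hxy hmem u
      have c1 : G.dist x u = G.dist u x := SimpleGraph.dist_comm
      have c2 : G.dist y u = G.dist u y := SimpleGraph.dist_comm
      have c3 : (quotGraph G (P i)).dist (proj G (P i) y) (proj G (P i) u)
          = (quotGraph G (P i)).dist (proj G (P i) u) (proj G (P i) y) :=
        SimpleGraph.dist_comm
      have c4 : (quotGraph G (P i)).dist (proj G (P i) x) (proj G (P i) u)
          = (quotGraph G (P i)).dist (proj G (P i) u) (proj G (P i) x) :=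
        SimpleGraph.dist_comm
      rw [c1, c2, c3, c4] at m3
      rw [eDist_mk, eDist_mk] at hEq
      refine ⟨hfe, ?_⟩
      rw [eDist_mk, eDist_mk]
      omega


end SzegedCut
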